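/- arXiv:2211.01984 — 7 statements merged into one kernel-verified Lean document; each statement's English description precedes it below -/
import Mathlib

section
/- In a finite directed graph G with a distinguished root vertex s, if every vertex is reachable from s, then every vertex x ≠ s has a unique immediate dominator: a vertex v ≠ x that dominates x (i.e., every path from s to x passes through v) and is dominated by every other dominator w ≠ x of x. -/
/-!
Fix a walk `p` from `s` to `x` and let `v` be the last vertex on `p` that is a dominator of `x`
other than `x` (the root `s` is one). Any dominator `w ≠ x` of `x` dominates `v`: splicing an
arbitrary walk to `v` with the tail of `p` after `v` gives a walk to `x`, which must contain `w`,
and `w` cannot lie in that tail. Uniqueness follows because domination is antisymmetric on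
reachable vertices: on a walk to `v` that visits `v` only at its end, a dominator `u ≠ v` of `v`
appears strictly before `v`, so the prefix up to `u` is a walk to `u` avoiding `v`.
-/

/-- `p` is a directed walk from `a` to `b` in the graph with adjacency `adj`. -/
def IsWalk {V : Type*} (adj : V → V → Prop) (a b : V) (p : List V) : Prop :=
  p.head? = some a ∧ p.getLast? = some b ∧ p.Chain' adj

/-- `b` is reachable from `a`. -/
def Reaches {V : Type*} (adj : V → V → Prop) (a b : V) : Prop :=
  ∃ p, IsWalk adj a b p

/-- `u` dominates `x` (w.r.t. root `s`): every walk from `s` to `x` contains `u`. -/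
def Dom {V : Type*} (adj : V → V → Prop) (s u x : V) : Prop :=
  ∀ p, IsWalk adj s x p → u ∈ p

theorem List.exists_eq_append_cons_of_last {α : Type*} {P : α → Prop} {l : List α}
    (h : ∃ a ∈ l, P a) :
    ∃ l₁ a l₂, l = l₁ ++ a :: l₂ ∧ P a ∧ ∀ b ∈ l₂, ¬ P b := by
  classical
  obtain ⟨a, ha, hPa⟩ := h
  obtain ⟨b, l₁, l₂, hl₁, hb, hrev, -⟩ :=
    List.exists_of_eraseP (p := fun a => decide (P a)) (List.mem_reverse.2 ha)
      (by simpa using hPa)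
  refine ⟨l₂.reverse, b, l₁.reverse, ?_, by simpa using hb, by simpa using hl₁⟩
  rw [← List.reverse_reverse l, hrev]
  simp

section Walks

variable {V : Type*} {adj : V → V → Prop} {s a x : V} {p l₁ l₂ : List V}

theorem IsWalk.head_mem (h : IsWalk adj s x p) : s ∈ p :=
  List.mem_of_mem_head? h.1

theorem IsWalk.last_mem (h : IsWalk adj s x p) : x ∈ p :=
  List.mem_of_getLast? h.2.1

theorem IsWalk.prefix (h : IsWalk adj s x (l₁ ++ a :: l₂)) : IsWalk adj s a (l₁ ++ [a]) := by
  obtain ⟨hhead, -, hchain⟩ := h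
  rw [List.append_cons] at hhead hchain
  refine ⟨?_, List.getLast?_concat, (List.isChain_append.mp hchain).1⟩
  rwa [List.head?_append_of_ne_nil _ (by simp)] at hhead

theorem IsWalk.splice {q : List V} (hq : IsWalk adj s a q) (hp : IsWalk adj s x (l₁ ++ a :: l₂))
    (hl₂ : l₂ ≠ []) : IsWalk adj s x (q ++ l₂) := by
  obtain ⟨hq_head, hq_last, hq_chain⟩ := hq
  obtain ⟨-, hp_last, hp_chain⟩ := hp
  obtain ⟨c, l₂, rfl⟩ := List.exists_cons_of_ne_nil hl₂
  have hchain := (List.isChain_append.mp hp_chain).2.1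
  refine ⟨?_, ?_, List.isChain_append.mpr ⟨hq_chain, hchain.tail, ?_⟩⟩
  · rwa [List.head?_append_of_ne_nil _ (by rintro rfl; simp at hq_head)]
  · simpa [List.getLast?_append_of_ne_nil] using hp_last
  · rintro y hy z hz
    obtain rfl : y = a := by simpa [hq_last] using hy.symm
    obtain rfl : z = c := by simpa using hz.symm
    exact (List.isChain_cons_cons.mp hchain).1

theorem Reaches.exists_walk_not_mem (h : Reaches adj s x) :
    ∃ l, IsWalk adj s x (l ++ [x]) ∧ x ∉ l := by
  classical
  obtain ⟨p, hp⟩ := h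
  obtain ⟨l₁, l₂, hx, rfl, -⟩ := List.exists_erase_eq hp.last_mem
  exact ⟨l₁, hp.prefix, hx⟩

end Walks

section Domination

variable {V : Type*} {adj : V → V → Prop} {s u v x : V}

theorem dom_root : Dom adj s s x := fun _ hp => hp.head_mem

theorem Dom.antisymm (huv : Dom adj s u v) (hvu : Dom adj s v u) (hv : Reaches adj s v) :
    u = v := by
  by_contra hne
  obtain ⟨l, hl, hvl⟩ := hv.exists_walk_not_mem
  have hul : u ∈ l := by simpa [hne] using huv _ hl
  obtain ⟨m₁, m₂, rfl⟩ := List.append_of_mem hul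
  have hvm₁ : v ∈ m₁ ++ [u] := hvu _ (IsWalk.prefix (l₂ := m₂ ++ [v]) (by simpa using hl))
  exact hvl (List.mem_append_left _ (by simpa [Ne.symm hne] using hvm₁))

theorem IsWalk.dom_of_last_dom (hp : IsWalk adj s x (l₁ ++ v :: l₂)) (hvx : v ≠ x)
    (hlast : ∀ w ∈ l₂, ¬ (w ≠ x ∧ Dom adj s w x)) {w : V} (hwx : w ≠ x)
    (hw : Dom adj s w x) : Dom adj s w v := by
  have hl₂ : l₂ ≠ [] := by
    rintro rfl
    exact hvx (by simpa using hp.2.1)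
  intro q hq
  rcases List.mem_append.mp (hw _ (hq.splice hp hl₂)) with hwq | hwl₂
  · exact hwq
  · exact absurd ⟨hwx, hw⟩ (hlast w hwl₂)

theorem exists_dom_forall_dom (hx : Reaches adj s x) (hxs : x ≠ s) :
    ∃ v, v ≠ x ∧ Dom adj s v x ∧ ∀ w, w ≠ x → Dom adj s w x → Dom adj s w v := by
  obtain ⟨p, hp⟩ := hx
  have hs : ∃ w ∈ p, w ≠ x ∧ Dom adj s w x := ⟨s, hp.head_mem, hxs.symm, dom_root⟩
  obtain ⟨l₁, v, l₂, rfl, ⟨hvx, hv⟩, hlast⟩ := List.exists_eq_append_cons_of_last hs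
  exact ⟨v, hvx, hv, fun w hwx hw => hp.dom_of_last_dom hvx hlast hwx hw⟩

end Domination

theorem stmt0_general {V : Type*} (adj : V → V → Prop) (s : V)
    (hreach : ∀ x : V, Reaches adj s x) :
    ∀ x : V, x ≠ s →
      ∃! v : V, v ≠ x ∧ Dom adj s v x ∧
        ∀ w : V, w ≠ x → w ≠ v → Dom adj s w x → Dom adj s w v := by
  intro x hxs
  obtain ⟨v, hvx, hv, hv_imm⟩ := exists_dom_forall_dom (hreach x) hxs
  refine ⟨v, ⟨hvx, hv, fun w hwx _ => hv_imm w hwx⟩, ?_⟩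
  rintro v' ⟨hv'x, hv', hv'_imm⟩
  by_contra hne
  exact hne (Dom.antisymm (hv_imm v' hv'x hv') (hv'_imm v hvx (Ne.symm hne) hv) (hreach v))

/-- Every vertex `x ≠ s` of a finite rooted digraph, all of whose vertices are
reachable from `s`, has a unique immediate dominator. -/
theorem stmt0 {V : Type*} [Fintype V] (adj : V → V → Prop) (s : V)
    (hreach : ∀ x : V, Reaches adj s x) :
    ∀ x : V, x ≠ s →
      ∃! v : V, v ≠ x ∧ Dom adj s v x ∧
        ∀ w : V, w ≠ x → w ≠ v → Dom adj s w x → Dom adj s w v :=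
  stmt0_general adj s hreach
end

section
/- In a finite rooted directed graph where every vertex is reachable from the root s, the edge set {(idom(x), x) : x ≠ s} forms a directed tree rooted at s (the dominator tree), i.e., the idom relation, iterated, reaches s from every vertex, and the resulting graph is acyclic with each non-root vertex having exactly one parent. -/
theorem exists_first_split {V : Type*} {u : V} {p : List V} (h : u ∈ p) :
    ∃ l1 l2, p = l1 ++ u :: l2 ∧ u ∉ l1 := by
  classical
  induction p with
  | nil => simp at h
  | cons a t ih =>
    by_cases ha : u = a
    · exact ⟨[], t, by simp [ha], by simp⟩
    · obtain ⟨l1, l2, rfl, hn⟩ := ih (by simpa [ha] using h)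
      exact ⟨a :: l1, l2, rfl, by simp [hn, ha]⟩

theorem walk_prefix {V : Type*} {adj : V → V → Prop} {s b u : V} {l1 l2 : List V}
    (h : IsWalk adj s b (l1 ++ u :: l2)) : IsWalk adj s u (l1 ++ [u]) := by
  obtain ⟨h1, h2, h3⟩ := h
  refine ⟨?_, ?_, ?_⟩
  · cases l1 <;> simpa using h1
  · simp
  · exact h3.prefix ⟨l2, by simp⟩

theorem dom_trans {V : Type*} {adj : V → V → Prop} {s u v w : V}
    (huv : Dom adj s u v) (hvw : Dom adj s v w) : Dom adj s u w := by
  intro p hp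
  obtain ⟨l1, l2, rfl, -⟩ := exists_first_split (hvw p hp)
  have hu := huv _ (walk_prefix hp)
  rcases List.mem_append.1 hu with h | h
  · exact List.mem_append.2 (Or.inl h)
  · simp only [List.mem_singleton] at h
    subst h; simp

theorem dom_antisymm {V : Type*} {adj : V → V → Prop} {s u x : V}
    (hreach : Reaches adj s x)
    (hux : Dom adj s u x) (hxu : Dom adj s x u) (hne : u ≠ x) : False := by
  obtain ⟨p, hp⟩ := hreach
  obtain ⟨l1, l2, rfl, hu1⟩ := exists_first_split (hux p hp)
  have hwu : IsWalk adj s u (l1 ++ [u]) := walk_prefix hp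
  have hx : x ∈ l1 ++ [u] := hxu _ hwu
  have hx1 : x ∈ l1 := by
    rcases List.mem_append.1 hx with h | h
    · exact h
    · simp only [List.mem_singleton] at h; exact absurd h.symm hne
  obtain ⟨m1, m2, hm, -⟩ := exists_first_split hx1
  have hwx : IsWalk adj s x (m1 ++ [x]) := by
    rw [hm] at hp
    have : m1 ++ x :: m2 ++ u :: l2 = m1 ++ x :: (m2 ++ u :: l2) := by simp
    rw [this] at hp
    exact walk_prefix hp
  have hu2 : u ∈ m1 ++ [x] := hux _ hwx
  rcases List.mem_append.1 hu2 with h | h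
  · exact hu1 (by rw [hm]; exact List.mem_append.2 (Or.inl h))
  · simp only [List.mem_singleton] at h; exact hne h

/-- The immediate-dominator edges `(idom x, x)` form a directed tree rooted at `s`:
iterating `idom` reaches `s` from every vertex, each non-root vertex has exactly
one parent, and the graph is acyclic. -/
theorem stmt1 {V : Type*} [Fintype V] (adj : V → V → Prop) (s : V)
    (hreach : ∀ x : V, Reaches adj s x) (idom : V → V) (hs : idom s = s)
    (hidom : ∀ x : V, x ≠ s →
      idom x ≠ x ∧ Dom adj s (idom x) x ∧
        ∀ w : V, w ≠ x → w ≠ idom x → Dom adj s w x → Dom adj s w (idom x)) :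
    (∀ x : V, ∃ n : ℕ, idom^[n] x = s) ∧
    (∀ x : V, x ≠ s → ∃! y : V, idom x = y) ∧
    (∀ x : V, ∀ n : ℕ, 0 < n → idom^[n] x = x → x = s) := by
  classical
  -- key lemma: if no iterate before m hits s, then idom^[m] x strictly dominates x
  have key : ∀ (m : ℕ) (x : V), 0 < m → (∀ k < m, idom^[k] x ≠ s) →
      idom^[m] x ≠ x ∧ Dom adj s (idom^[m] x) x := by
    intro m
    induction m with
    | zero => intro x h; exact absurd h (lt_irrefl 0)
    | succ m ih =>
      intro x _ hk
      rcases Nat.eq_zero_or_pos m with hm | hm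
      · subst hm
        have hx : x ≠ s := by simpa using hk 0 (by norm_num)
        obtain ⟨h1, h2, -⟩ := hidom x hx
        simpa using ⟨h1, h2⟩
      · obtain ⟨ih1, ih2⟩ := ih x hm (fun k hkm => hk k (Nat.lt_succ_of_lt hkm))
        set y := idom^[m] x with hy
        have hys : y ≠ s := hk m (Nat.lt_succ_self m)
        obtain ⟨h1, h2, -⟩ := hidom y hys
        rw [Function.iterate_succ_apply', ← hy]
        constructor
        · intro heq
          exact dom_antisymm (hreach x) ih2 (heq ▸ h2) ih1
        · exact dom_trans h2 ih2
  refine ⟨?_, ?_, ?_⟩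
  · intro x
    by_contra h
    push_neg at h
    have hinj : Function.Injective (fun k : Fin (Fintype.card V + 1) => idom^[(k : ℕ)] x) := by
      have strict : ∀ i j : ℕ, i < j → idom^[j] x ≠ idom^[i] x := by
        intro i j hij
        have hsub : idom^[j] x = idom^[j - i] (idom^[i] x) := by
          rw [← Function.iterate_add_apply, Nat.sub_add_cancel hij.le]
        rw [hsub]
        have := key (j - i) (idom^[i] x) (Nat.sub_pos_of_lt hij)
          (fun k _ => by rw [← Function.iterate_add_apply]; exact h _)
        exact this.1
      intro i j hij
      simp only at hij
      rcases lt_trichotomy (i : ℕ) (j : ℕ) with hlt | heq | hlt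
      · exact absurd hij.symm (strict _ _ hlt)
      · exact Fin.ext heq
      · exact absurd hij (strict _ _ hlt)
    have := Fintype.card_le_of_injective _ hinj
    simp at this
  · intro x _
    exact ⟨idom x, rfl, fun y hy => hy.symm⟩
  · intro x n hn hfix
    by_contra hxs
    by_cases hhit : ∀ k < n, idom^[k] x ≠ s
    · exact (key n x hn hhit).1 hfix
    · push_neg at hhit
      obtain ⟨k, hk, hks⟩ := hhit
      have : idom^[n] x = s := by
        rw [← Nat.sub_add_cancel hk.le, Function.iterate_add_apply, hks,
          Function.iterate_fixed hs]
      exact hxs (hfix ▸ this)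
end

section
/- Let Γ be the smallest set of vertices of G_s containing {s} ∪ r(s) ∪ Γ₀ and closed under adding meeting points: if x, y ∈ Γ and z is a meeting point of x and y (there exist two vertex-disjoint directed paths from x to z and from y to z), then z ∈ Γ. Then for each x ∈ Γ, define the Sybil cluster K_x as the set of vertices t such that some directed path from x to t contains no vertex of Γ other than x. The clusters {K_x : x ∈ Γ} are pairwise disjoint and their union is the whole vertex set of G_s. -/
/-- `z` is a meeting point of `x` and `y`: two directed walks from `x` and `y` to `z`
that are vertex-disjoint except for the common endpoint `z`. -/
def MeetPoint {V : Type*} (adj : V → V → Prop) (x y z : V) : Prop :=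
  ∃ p q, IsWalk adj x z p ∧ IsWalk adj y z q ∧ ∀ w, w ∈ p → w ∈ q → w = z

/-- The smallest set of vertices containing `s`, the out-neighbors of `s` and `Γ₀`,
closed under adding meeting points of members (graphical non-Sybil agents). -/
inductive Gamma {V : Type*} (adj : V → V → Prop) (s : V) (Γ0 : Set V) : V → Prop
  | base (x : V) : (x = s ∨ adj s x ∨ x ∈ Γ0) → Gamma adj s Γ0 x
  | meet (x y z : V) : Gamma adj s Γ0 x → Gamma adj s Γ0 y → MeetPoint adj x y z →
      Gamma adj s Γ0 z

/-- The Sybil cluster of `x`: vertices `t` admitting a walk from `x` to `t`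
containing no vertex of `Γ` other than `x`. -/
def Cluster {V : Type*} (adj : V → V → Prop) (s : V) (Γ0 : Set V) (x t : V) : Prop :=
  ∃ p, IsWalk adj x t p ∧ ∀ w ∈ p, Gamma adj s Γ0 w → w = x

/-!
Two walks `x ⇝ t` and `y ⇝ t` can be cut, at the first vertex `z` of the first walk lying on the
second, into two walks meeting only at `z`. So `z ∈ Γ` whenever `x, y ∈ Γ`; if both walks avoid
`Γ` outside their starting points, this forces `x = z = y`. Conversely, a walk from `s ∈ Γ` to `t`
puts `t` into the cluster of the last vertex of `Γ` on that walk.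
-/

namespace IsWalk

variable {V : Type*} {adj : V → V → Prop} {a b c : V} {p : List V}

lemma start_mem (h : IsWalk adj a b p) : a ∈ p := List.mem_of_mem_head? h.1

lemma end_mem (h : IsWalk adj a b p) : b ∈ p := List.mem_of_getLast? h.2.1

lemma singleton (a : V) : IsWalk adj a a [a] := ⟨rfl, rfl, List.isChain_singleton a⟩

lemma cons (h : IsWalk adj b c p) (hab : adj a b) : IsWalk adj a c (a :: p) :=
  ⟨rfl, by simp [List.getLast?_cons, h.2.1],
    h.2.2.cons fun y hy => by rw [h.1, Option.mem_some_iff] at hy; exact hy ▸ hab⟩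

lemma reverse (h : IsWalk adj a b p) : IsWalk (flip adj) b a p.reverse :=
  ⟨by rw [List.head?_reverse]; exact h.2.1, by rw [List.getLast?_reverse]; exact h.1,
    List.isChain_reverse.mpr h.2.2⟩

lemma exists_prefix_to_first (S : V → Prop) (h : IsWalk adj a b p) (hS : ∃ w ∈ p, S w) :
    ∃ z q, IsWalk adj a z q ∧ S z ∧ q ⊆ p ∧ ∀ w ∈ q, S w → w = z := by
  induction p generalizing a with
  | nil => simp at hS
  | cons a' l ih =>
    obtain rfl : a = a' := by simpa using h.1.symm
    by_cases ha : S a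
    · exact ⟨a, [a], singleton a, ha, by simp, by simp⟩
    obtain ⟨w, hw, hSw⟩ := hS
    have hwl : w ∈ l := (List.mem_cons.mp hw).resolve_left (by rintro rfl; exact ha hSw)
    obtain ⟨b', l', rfl⟩ := List.exists_cons_of_ne_nil (List.ne_nil_of_mem hwl)
    have hadj : adj a b' := (List.isChain_cons_cons.mp h.2.2).1
    have htail : IsWalk adj b' b (b' :: l') :=
      ⟨rfl, by simpa using h.2.1, (List.isChain_cons_cons.mp h.2.2).2⟩
    obtain ⟨z, q, hq, hSz, hqsub, hqfirst⟩ := ih htail ⟨w, hwl, hSw⟩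
    refine ⟨z, a :: q, hq.cons hadj, hSz, List.cons_subset_cons a hqsub, ?_⟩
    rintro w (_ | ⟨_, hw⟩) hSw
    · exact absurd hSw ha
    · exact hqfirst w hw hSw

lemma exists_suffix_from_last (S : V → Prop) (h : IsWalk adj a b p) (hS : ∃ w ∈ p, S w) :
    ∃ z q, IsWalk adj z b q ∧ S z ∧ q ⊆ p ∧ ∀ w ∈ q, S w → w = z := by
  obtain ⟨z, q, hq, hSz, hqsub, hqlast⟩ :=
    h.reverse.exists_prefix_to_first S (by simpa only [List.mem_reverse] using hS)
  refine ⟨z, q.reverse, hq.reverse, hSz, fun w hw => ?_, fun w hw => hqlast w ?_⟩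
  · simpa using hqsub (List.mem_reverse.mp hw)
  · exact List.mem_reverse.mp hw

end IsWalk

section Clusters

variable {V : Type*} {adj : V → V → Prop}

lemma IsWalk.exists_meetPoint {x y t : V} {p q : List V} (hp : IsWalk adj x t p)
    (hq : IsWalk adj y t q) : ∃ z ∈ p, z ∈ q ∧ MeetPoint adj x y z := by
  obtain ⟨z, p₁, hp₁, hzq, hp₁p, hp₁first⟩ :=
    hp.exists_prefix_to_first (· ∈ q) ⟨t, hp.end_mem, hq.end_mem⟩
  obtain ⟨z', q₁, hq₁, hz'z, hq₁q, -⟩ := hq.exists_prefix_to_first (· = z) ⟨z, hzq, rfl⟩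
  rw [hz'z] at hq₁
  exact ⟨z, hp₁p hp₁.end_mem, hzq, p₁, q₁, hp₁, hq₁, fun w hwp hwq => hp₁first w hwp (hq₁q hwq)⟩

variable {s : V} {Γ0 : Set V}

lemma Cluster.eq_of_gamma {x y t : V} (hx : Gamma adj s Γ0 x) (hy : Gamma adj s Γ0 y)
    (hxt : Cluster adj s Γ0 x t) (hyt : Cluster adj s Γ0 y t) : x = y := by
  obtain ⟨p, hp, hpΓ⟩ := hxt
  obtain ⟨q, hq, hqΓ⟩ := hyt
  obtain ⟨z, hzp, hzq, hmeet⟩ := hp.exists_meetPoint hq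
  have hzΓ : Gamma adj s Γ0 z := .meet x y z hx hy hmeet
  exact (hpΓ z hzp hzΓ).symm.trans (hqΓ z hzq hzΓ)

lemma exists_gamma_cluster_of_reaches {t : V} (ht : Reaches adj s t) :
    ∃ x, Gamma adj s Γ0 x ∧ Cluster adj s Γ0 x t := by
  obtain ⟨p, hp⟩ := ht
  obtain ⟨x, q, hq, hxΓ, -, hqlast⟩ :=
    hp.exists_suffix_from_last (Gamma adj s Γ0) ⟨s, hp.start_mem, .base s (.inl rfl)⟩
  exact ⟨x, hxΓ, q, hq, hqlast⟩

end Clusters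

theorem stmt4_general {V : Type*} (adj : V → V → Prop) (s : V) (Γ0 : Set V)
    (hreach : ∀ x : V, Reaches adj s x) :
    (∀ x y : V, Gamma adj s Γ0 x → Gamma adj s Γ0 y → x ≠ y →
      ∀ t : V, Cluster adj s Γ0 x t → Cluster adj s Γ0 y t → False) ∧
    (∀ t : V, ∃ x : V, Gamma adj s Γ0 x ∧ Cluster adj s Γ0 x t) :=
  ⟨fun _ _ hx hy hxy _ hxt hyt => hxy (Cluster.eq_of_gamma hx hy hxt hyt),
    fun t => exists_gamma_cluster_of_reaches (hreach t)⟩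

/-- The Sybil clusters `{K_x : x ∈ Γ}` are pairwise disjoint and their union is
the whole vertex set. -/
theorem stmt4 {V : Type*} [Fintype V] (adj : V → V → Prop) (s : V) (Γ0 : Set V)
    (hreach : ∀ x : V, Reaches adj s x) :
    (∀ x y : V, Gamma adj s Γ0 x → Gamma adj s Γ0 y → x ≠ y →
      ∀ t : V, Cluster adj s Γ0 x t → Cluster adj s Γ0 y t → False) ∧
    (∀ t : V, ∃ x : V, Gamma adj s Γ0 x ∧ Cluster adj s Γ0 x t) :=
  stmt4_general adj s Γ0 hreach
end

section
/- On a rooted directed graph, if φ is a set of vertices such that every edge into φ from outside φ enters at a single vertex i ∈ φ (i.e., Sybil identities of i have no incoming edges from vertices outside φ other than via i), then i dominates every vertex of φ reachable from the root; moreover the vertices of φ lying on the dominator sequence of any vertex form a contiguous subsequence starting at i. -/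
/-!
Every walk from outside `φ` to a vertex of `φ` ends with a walk from `i` that stays inside `φ`:
the last step from outside into `φ` must enter at `i`. Hence `i` dominates `φ`. For contiguity,
suppose `u, w ∈ φ`, `u` dominates `v`, `v` dominates `w`, and `v ∉ φ`. Cutting a walk from `s`
to `v` at its first visit of `v` gives a walk to `u` avoiding `v`, and its prefix up to `i`
still avoids `v`. Following it by a walk from `i` to `w` inside `φ`, which avoids `v` as well,
contradicts the domination of `w` by `v`.
-/

namespace IsWalk

variable {V : Type*} {adj : V → V → Prop} {a b m : V} {p q r : List V}

theorem head_mem_s15 (hp : IsWalk adj a b p) : a ∈ p :=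
  List.mem_of_mem_head? hp.1

theorem last_mem_s15 (hp : IsWalk adj a b p) : b ∈ p :=
  List.mem_of_mem_getLast? hp.2.1

theorem append_cons_iff :
    IsWalk adj a b (q ++ m :: r) ↔ IsWalk adj a m (q ++ [m]) ∧ IsWalk adj m b (m :: r) := by
  have hhead : (q ++ m :: r).head? = (q ++ [m]).head? := by cases q <;> rfl
  unfold IsWalk List.Chain'
  rw [hhead, List.getLast?_append_cons, List.isChain_split]
  simp only [List.getLast?_append, List.getLast?_singleton, Option.some_or]
  tauto

theorem append (hq : IsWalk adj a m q) (hr : IsWalk adj m b r) : IsWalk adj a b (q ++ r.tail) := by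
  obtain ⟨q, rfl⟩ := List.getLast?_eq_some_iff.1 hq.2.1
  obtain ⟨r, rfl⟩ := List.head?_eq_some_iff.1 hr.1
  simpa using append_cons_iff.2 ⟨hq, hr⟩

theorem exists_prefix (hp : IsWalk adj a b p) (hm : m ∈ p) : ∃ q, IsWalk adj a m q ∧ q <+: p := by
  obtain ⟨q, r, rfl⟩ := List.append_of_mem hm
  exact ⟨q ++ [m], (append_cons_iff.1 hp).1, r, by simp⟩

variable {φ : Set V} {i : V}

theorem forall_mem_or_exists_entry_suffix (hedge : ∀ u w, adj u w → w ∈ φ → w ≠ i → u ∈ φ)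
    (hp : IsWalk adj a b p) (hb : b ∈ φ) :
    (∀ x ∈ p, x ∈ φ) ∨ ∃ r, IsWalk adj i b r ∧ r <:+ p ∧ ∀ x ∈ r, x ∈ φ := by
  induction p generalizing a with
  | nil => simp [IsWalk] at hp
  | cons x t ih =>
    obtain rfl : x = a := by simpa using hp.1
    cases t with
    | nil =>
      obtain rfl : x = b := by simpa using hp.2.1
      simp [hb]
    | cons y t =>
      obtain ⟨hxy, hchain⟩ := List.isChain_cons_cons.1 hp.2.2
      have htail : IsWalk adj y b (y :: t) := ⟨rfl, by simpa using hp.2.1, hchain⟩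
      rcases ih htail with hall | ⟨r, hr, hsuffix, hrφ⟩
      · by_cases hx : x ∈ φ
        · exact .inl (by simpa [hx] using hall)
        · obtain rfl : y = i := by_contra fun hyi => hx (hedge x y hxy (hall y (by simp)) hyi)
          exact .inr ⟨y :: t, htail, List.suffix_cons x _, hall⟩
      · exact .inr ⟨r, hr, hsuffix.trans (List.suffix_cons x _), hrφ⟩

theorem exists_entry_suffix (hedge : ∀ u w, adj u w → w ∈ φ → w ≠ i → u ∈ φ)
    (hp : IsWalk adj a b p) (ha : a ∉ φ) (hb : b ∈ φ) :
    ∃ r, IsWalk adj i b r ∧ r <:+ p ∧ ∀ x ∈ r, x ∈ φ :=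
  (hp.forall_mem_or_exists_entry_suffix hedge hb).resolve_left fun hall => ha (hall a hp.head_mem_s15)

end IsWalk

theorem dom_entry_of_mem {V : Type*} {adj : V → V → Prop} {s i : V} {φ : Set V}
    (hedge : ∀ u w, adj u w → w ∈ φ → w ≠ i → u ∈ φ) (hs : s ∉ φ) {w : V} (hw : w ∈ φ) :
    Dom adj s i w := fun _ hp =>
  have ⟨_, hr, hsuffix, _⟩ := hp.exists_entry_suffix hedge hs hw
  hsuffix.subset hr.head_mem_s15

theorem Dom.exists_isWalk_not_mem {V : Type*} {adj : V → V → Prop} {s u v : V}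
    (hd : Dom adj s u v) (huv : u ≠ v) (hv : Reaches adj s v) :
    ∃ q, IsWalk adj s u q ∧ v ∉ q := by
  obtain ⟨p, hp⟩ := hv
  obtain ⟨p₁, p₂, rfl, hvp₁⟩ := List.eq_append_cons_of_mem hp.last_mem_s15
  have hp₁ := (IsWalk.append_cons_iff.1 hp).1
  have hu : u ∈ p₁ := by simpa [huv] using hd _ hp₁
  obtain ⟨q, r, rfl⟩ := List.append_of_mem hu
  have hqr : IsWalk adj s v (q ++ u :: (r ++ [v])) := by simpa using hp₁
  refine ⟨q ++ [u], (IsWalk.append_cons_iff.1 hqr).1, ?_⟩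
  simp only [List.mem_append, List.mem_cons, not_or] at hvp₁ ⊢
  exact ⟨hvp₁.1, hvp₁.2.1, by simp⟩

theorem stmt15_general {V : Type*} (adj : V → V → Prop) (s : V)
    (hreach : ∀ x : V, Reaches adj s x)
    (φ : Set V) (i : V) (hs : s ∉ φ)
    (hedge : ∀ u w : V, adj u w → w ∈ φ → w ≠ i → u ∈ φ) :
    (∀ w ∈ φ, Dom adj s i w) ∧
    (∀ x u v w : V, u ∈ φ → w ∈ φ →
      Dom adj s u x → Dom adj s v x → Dom adj s w x →
      Dom adj s u v → Dom adj s v w → v ∈ φ) := by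
  refine ⟨fun w hw => dom_entry_of_mem hedge hs hw, fun x u v w hu hw _ _ _ huv hvw => ?_⟩
  by_contra hv
  obtain ⟨q, hq, hvq⟩ := huv.exists_isWalk_not_mem (ne_of_mem_of_not_mem hu hv) (hreach v)
  obtain ⟨q', hq', hq'q⟩ := hq.exists_prefix (dom_entry_of_mem hedge hs hu q hq)
  obtain ⟨p, hp⟩ := hreach w
  obtain ⟨r, hr, -, hrφ⟩ := hp.exists_entry_suffix hedge hs hw
  rcases List.mem_append.1 (hvw _ (hq'.append hr)) with hvq' | hvr
  · exact hvq (hq'q.subset hvq')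
  · exact hv (hrφ v (List.mem_of_mem_tail hvr))

/-- If `φ` is a set of Sybil identities of `i` (every edge into `φ \\ {i}` comes
from inside `φ`, and `s ∉ φ`), then `i` dominates every vertex of `φ`; moreover
the vertices of `φ` on any dominator sequence are contiguous: any vertex `v`
dominated between two dominators `u, w ∈ φ` of a common vertex `x` is itself
in `φ`. -/
theorem stmt15 {V : Type*} [Fintype V] (adj : V → V → Prop) (s : V)
    (hreach : ∀ x : V, Reaches adj s x)
    (φ : Set V) (i : V) (hi : i ∈ φ) (hs : s ∉ φ)
    (hedge : ∀ u w : V, adj u w → w ∈ φ → w ≠ i → u ∈ φ) :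
    (∀ w ∈ φ, Dom adj s i w) ∧
    (∀ x u v w : V, u ∈ φ → w ∈ φ →
      Dom adj s u x → Dom adj s v x → Dom adj s w x →
      Dom adj s u v → Dom adj s v w → v ∈ φ) :=
  stmt15_general adj s hreach φ i hs hedge
end

section
/- Revenue comparison STM ≥ IDM: fix a reachable graph G_s with bids, highest bidder x*, and dominator sequence c_0 = s, ..., c_ℓ = x*. IDM's revenue equals p_1, while STM's revenue equals p_1 + Σ_{1≤j<d}(p_{j+1} − q_j) ≥ p_1, since q_j ≤ p_{j+1} for each j. Hence STM's revenue is at least IDM's revenue on every profile. -/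
/-- Revenue comparison STM ≥ IDM: STM's revenue
`p_d + Σ_{1≤j<d}(p_j − q_j)` equals `p_1 + Σ_{1≤j<d}(p_{j+1} − q_j)` and is at
least IDM's revenue `p_1`, since `q_j ≤ p_{j+1}` for each broker index. -/
theorem stmt17 (p q : ℕ → ℝ) (d : ℕ) (hd : 1 ≤ d)
    (h : ∀ j, 1 ≤ j → j < d → q j ≤ p (j + 1)) :
    (p d + ∑ j ∈ Finset.Ico 1 d, (p j - q j)
        = p 1 + ∑ j ∈ Finset.Ico 1 d, (p (j + 1) - q j)) ∧
    p 1 ≤ p d + ∑ j ∈ Finset.Ico 1 d, (p j - q j) := by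
  have tel : ∑ j ∈ Finset.Ico 1 d, (p (j + 1) - p j) = p d - p 1 := by
    rw [Finset.sum_Ico_eq_sub _ hd, Finset.sum_range_sub p, Finset.sum_range_sub p]
    simp
  have split : ∑ j ∈ Finset.Ico 1 d, (p (j + 1) - q j)
      = ∑ j ∈ Finset.Ico 1 d, ((p (j + 1) - p j) + (p j - q j)) := by
    apply Finset.sum_congr rfl; intros; ring
  have key : p d + ∑ j ∈ Finset.Ico 1 d, (p j - q j)
      = p 1 + ∑ j ∈ Finset.Ico 1 d, (p (j + 1) - q j) := by
    rw [split, Finset.sum_add_distrib, tel]; ring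
  refine ⟨key, ?_⟩
  rw [key]
  have : (0:ℝ) ≤ ∑ j ∈ Finset.Ico 1 d, (p (j + 1) - q j) := by
    apply Finset.sum_nonneg
    intro j hj
    rw [Finset.mem_Ico] at hj
    linarith [h j hj.1 hj.2]
  linarith
end

section
/- Revenue comparison IDM ≥ VCG: with notation as above, VCG's seller revenue equals p_d − Σ_{1≤j<d}(v'_{x*} − p_j) = p_1 + Σ_{2≤j≤d}(p_j − v'_{x*}) ≤ p_1, since each p_j ≤ v'_{x*} (as v'_{x*} is the maximum bid). Hence IDM's revenue p_1 is at least VCG's revenue on every profile. -/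
/-- Revenue comparison IDM ≥ VCG: VCG's revenue
`p_d − Σ_{1≤j<d}(v* − p_j)` equals `p_1 + Σ_{2≤j≤d}(p_j − v*)` and is at most
IDM's revenue `p_1`, since every `p_j ≤ v*`. -/
theorem stmt18 (p : ℕ → ℝ) (vstar : ℝ) (d : ℕ) (hd : 1 ≤ d)
    (h : ∀ j, 1 ≤ j → j ≤ d → p j ≤ vstar) :
    (p d - ∑ j ∈ Finset.Ico 1 d, (vstar - p j)
        = p 1 + ∑ j ∈ Finset.Icc 2 d, (p j - vstar)) ∧
    p d - ∑ j ∈ Finset.Ico 1 d, (vstar - p j) ≤ p 1 := by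
  have heq : p d - ∑ j ∈ Finset.Ico 1 d, (vstar - p j)
      = p 1 + ∑ j ∈ Finset.Icc 2 d, (p j - vstar) := by
    induction d with
    | zero => omega
    | succ n ih =>
      rcases Nat.eq_or_lt_of_le hd with h1 | h1
      · simp [← h1]
      · have hn : 1 ≤ n := by omega
        have := ih hn (fun j hj hjn => h j hj (by omega))
        rw [Finset.sum_Ico_succ_top hn,
          show n + 1 = n + 1 from rfl]
        have h2 : Finset.Icc 2 (n + 1) = insert (n + 1) (Finset.Icc 2 n) := by
          ext x; simp [Finset.mem_Icc]; omega
        rw [h2, Finset.sum_insert (by simp)]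
        linarith
  refine ⟨heq, ?_⟩
  rw [heq]
  have : ∑ j ∈ Finset.Icc 2 d, (p j - vstar) ≤ 0 := by
    apply Finset.sum_nonpos
    intro j hj
    simp only [Finset.mem_Icc] at hj
    linarith [h j (by omega) hj.2]
  linarith
end

section
/- Social welfare comparison: the winner selected by STM has bid at most the bid of the winner selected by IDM, which is at most the maximum bid (VCG's welfare). Concretely, if every IDM candidate winner (a vertex c_j on the dominator sequence with v'_{c_j} ≥ p_{j+1}) is also an STM candidate winner (v'_{c_j} ≥ q_j, which holds since q_j ≤ p_{j+1}), and each mechanism picks the lowest-index candidate, then the STM winner's index is ≤ the IDM winner's index and its bid is ≤ the IDM winner's bid, because along the dominator sequence the thresholds q_j are nondecreasing and the earliest qualifying bid is the smallest qualifying one. -/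
/-- Social-welfare comparison along the dominator sequence `c_0 = s, …, c_ℓ = x*`
with bids `b j = v'_{c_j}` and thresholds `p_1 ≤ q_1 ≤ p_2 ≤ …`: the STM winner
(lowest index `dS` with `b dS ≥ q dS`, default `ℓ`) has index at most the IDM
winner's index `dI` (lowest with `b dI ≥ p (dI+1)`, default `ℓ`), its bid is at
most the IDM winner's bid, which is at most the maximum bid `b ℓ`
(VCG's welfare). -/
theorem stmt19 (ℓ dS dI : ℕ) (b p q : ℕ → ℝ)
    (hchain : ∀ j, p j ≤ q j ∧ q j ≤ p (j + 1))
    (hb : ∀ j, b j ≤ p (j + 1))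
    (hpl : p (ℓ + 1) = b ℓ)
    (hmax : ∀ j, j ≤ ℓ → b j ≤ b ℓ)
    (hdS1 : 1 ≤ dS) (hdSl : dS ≤ ℓ) (hdI1 : 1 ≤ dI) (hdIl : dI ≤ ℓ)
    (hScand : q dS ≤ b dS ∨ dS = ℓ)
    (hSmin : ∀ j, 1 ≤ j → j < dS → b j < q j)
    (hIcand : p (dI + 1) ≤ b dI ∨ dI = ℓ)
    (hImin : ∀ j, 1 ≤ j → j < dI → b j < p (j + 1)) :
    dS ≤ dI ∧ b dS ≤ b dI ∧ b dI ≤ b ℓ := by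
  have pmono : ∀ m n : ℕ, m ≤ n → p m ≤ p n := by
    intro m n h
    induction n with
    | zero => simp_all
    | succ k ih =>
      rcases Nat.lt_or_ge m (k+1) with h'|h'
      · exact le_trans (ih (Nat.lt_succ_iff.mp h')) (le_trans (hchain k).1 (hchain k).2)
      · have : m = k + 1 := le_antisymm h h'
        simp [this]
  have hSI : dS ≤ dI := by
    by_contra h
    push_neg at h
    have h1 := hSmin dI hdI1 h
    rcases hIcand with h2 | h2
    · linarith [(hchain dI).2]
    · omega
  refine ⟨hSI, ?_, hmax dI hdIl⟩
  rcases eq_or_lt_of_le hSI with h | h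
  · simp [h]
  · have hSl : dS < ℓ := lt_of_lt_of_le h hdIl
    have hq : q dS ≤ b dS := by
      rcases hScand with h2 | h2
      · exact h2
      · omega
    have hbS : b dS ≤ p (dS + 1) := hb dS
    rcases hIcand with h2 | h2
    · have := pmono (dS+1) (dI+1) (by omega)
      linarith
    · subst h2
      exact hmax dS (le_of_lt hSl)
end
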